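/- Let p ∈ ℝ[z_1,...,z_m] be real stable and let z ∈ ℝ^m be above all roots of p. Then for all i, j ≤ m, the partial derivatives of the barrier functions at z satisfy ∂_{z_i} Ψ^j_p(z) ≥ 2·Φ^j_p(z) · ∂_{z_i} Φ^j_p(z); equivalently, since ∂_{z_i} Φ^j_p(z) ≤ 0, whenever ∂_{z_i} Φ^j_p(z) ≠ 0 one has (∂_{z_i} Ψ^j_p(z)) / (∂_{z_i} Φ^j_p(z)) ≤ 2·Φ^j_p(z). -/

import Mathlib

noncomputable section

/-- A polynomial `p ∈ ℝ[z_1,...,z_m]` is real stable if it has no root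
`(z_1,...,z_m) ∈ ℂ^m` with `Im(z_i) > 0` for every `i`. -/
def RealStable {m : ℕ} (p : MvPolynomial (Fin m) ℝ) : Prop :=
  ∀ z : Fin m → ℂ, (∀ i, 0 < (z i).im) → (MvPolynomial.aeval z) p ≠ 0

/-- `z ∈ ℝ^m` is above all roots of `p` if `p(z + t) > 0` for every `t ≥ 0`. -/
def AboveRoots {m : ℕ} (p : MvPolynomial (Fin m) ℝ) (z : Fin m → ℝ) : Prop :=
  ∀ t : Fin m → ℝ, (∀ i, 0 ≤ t i) → 0 < MvPolynomial.eval (z + t) p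

/-- The barrier function `Φ^j_p(z) = (∂_{z_j} p)(z) / p(z)`. -/
def Phi {m : ℕ} (p : MvPolynomial (Fin m) ℝ) (j : Fin m) (z : Fin m → ℝ) : ℝ :=
  MvPolynomial.eval z (MvPolynomial.pderiv j p) / MvPolynomial.eval z p

/-- The partial derivative `∂_{z_i} Φ^j_p(z)` of the barrier function, as the rational
function `((∂_i ∂_j p)·p − (∂_j p)·(∂_i p)) / p²` evaluated at `z`. -/
def dPhi {m : ℕ} (p : MvPolynomial (Fin m) ℝ) (i j : Fin m) (z : Fin m → ℝ) : ℝ :=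
  (MvPolynomial.eval z (MvPolynomial.pderiv i (MvPolynomial.pderiv j p)) *
      MvPolynomial.eval z p -
    MvPolynomial.eval z (MvPolynomial.pderiv j p) *
      MvPolynomial.eval z (MvPolynomial.pderiv i p)) /
    (MvPolynomial.eval z p) ^ 2

/-- The partial derivative `∂_{z_i} Ψ^j_p(z)` of the second-order barrier function
`Ψ^j_p = (∂²_{z_j} p)/p`, as the rational function
`((∂_i ∂²_j p)·p − (∂²_j p)·(∂_i p)) / p²` evaluated at `z`. -/
def dPsi {m : ℕ} (p : MvPolynomial (Fin m) ℝ) (i j : Fin m) (z : Fin m → ℝ) : ℝ :=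
  (MvPolynomial.eval z
        (MvPolynomial.pderiv i (MvPolynomial.pderiv j (MvPolynomial.pderiv j p))) *
      MvPolynomial.eval z p -
    MvPolynomial.eval z (MvPolynomial.pderiv j (MvPolynomial.pderiv j p)) *
      MvPolynomial.eval z (MvPolynomial.pderiv i p)) /
    (MvPolynomial.eval z p) ^ 2

/-!
Restrict `p` to the complex plane `z + x e_i + y e_j` and, for fixed `x`, let `β` run over the roots
of `y ↦ p(z + x e_i + y e_j)`. At real `x` one has `Φ^j = ∑ 1/(-β)` and `Φ^j² - Ψ^j = ∑ 1/β²`.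
By Hurwitz's theorem, `p` has no zeros at points each of whose coordinates is either in the upper
half-plane or real and above `z`. Hence the roots lie in the closed lower half-plane when
`Im x > 0`, and on the negative real axis when `x ≥ 0` is real; by continuity of roots they keep
`Re β < 0` for `x` near such a point. So both sums, as functions of `x`, are real on the real axis
and take values in the closed lower half-plane just above it, and their derivatives along the real
axis are `≤ 0`: these are `∂_i Φ^j ≤ 0` and `∂_i (Φ^j² - Ψ^j) ≤ 0`, i.e. the claimed inequality.
Continuity of roots needs the leading coefficient in `y` not to vanish at `x`, which fails only at
finitely many `x`; the inequality at `x = 0` then follows by continuity.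
-/

open Polynomial Filter Topology Complex

namespace Polynomial

theorem norm_eval_eq_prod_roots (f : ℂ[X]) (y : ℂ) :
    ‖f.eval y‖ = ‖f.leadingCoeff‖ * (f.roots.map fun β => ‖y - β‖).prod := by
  rw [(IsAlgClosed.splits f).eval_eq_prod_roots, norm_mul,
    ← normHom_apply (Multiset.prod _), map_multiset_prod, Multiset.map_map]
  rfl

theorem norm_eval_le_of_roots_far (f : ℂ[X]) {y₀ y₁ : ℂ} {δ : ℝ}
    (hroots : ∀ β ∈ f.roots, δ ≤ dist y₀ β) (hy : dist y₁ y₀ ≤ δ / 2) :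
    ‖f.eval y₁‖ ≤ (3 / 2 : ℝ) ^ f.natDegree * ‖f.eval y₀‖ := by
  have hfactor : ∀ β ∈ f.roots, ‖y₁ - β‖ ≤ 3 / 2 * ‖y₀ - β‖ := fun β hβ => by
    rw [← dist_eq_norm, ← dist_eq_norm]
    linarith [dist_triangle y₁ y₀ β, hroots β hβ]
  have hprod : (f.roots.map fun β => ‖y₁ - β‖).prod
      ≤ (3 / 2 : ℝ) ^ Multiset.card f.roots * (f.roots.map fun β => ‖y₀ - β‖).prod := by
    calc _ ≤ (f.roots.map fun β => 3 / 2 * ‖y₀ - β‖).prod :=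
          Multiset.prod_map_le_prod_map₀ _ _ (fun _ _ => norm_nonneg _) hfactor
      _ = _ := by rw [Multiset.prod_map_mul]; simp
  have hpow : (3 / 2 : ℝ) ^ Multiset.card f.roots ≤ (3 / 2) ^ f.natDegree :=
    pow_le_pow_right₀ (by norm_num) (card_roots' f)
  have hnonneg : 0 ≤ (f.roots.map fun β => ‖y₀ - β‖).prod :=
    Multiset.prod_nonneg fun _ h => by obtain ⟨β, -, rfl⟩ := Multiset.mem_map.mp h; positivity
  rw [norm_eval_eq_prod_roots, norm_eval_eq_prod_roots]
  calc _ ≤ ‖f.leadingCoeff‖ * ((3 / 2 : ℝ) ^ Multiset.card f.roots *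
        (f.roots.map fun β => ‖y₀ - β‖).prod) := by gcongr
    _ ≤ _ := by rw [mul_left_comm]; gcongr

theorem eventually_nhdsNE_eval_ne_zero {f : ℂ[X]} (hf : f ≠ 0) (a : ℂ) :
    ∀ᶠ y in 𝓝[≠] a, f.eval y ≠ 0 :=
  nhdsNE_le_cofinite a (finite_setOfPred_isRoot hf).compl_mem_cofinite

theorem hasDerivAt_sum_roots_inv_sub (s : Multiset ℂ) {y : ℂ} (hy : ∀ β ∈ s, y ≠ β) :
    HasDerivAt (fun w => (s.map fun β => 1 / (w - β)).sum)
      (s.map fun β => -(1 / (y - β) ^ 2)).sum y := by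
  induction s using Multiset.induction_on with
  | empty => simpa using hasDerivAt_const y (0 : ℂ)
  | cons a s ih =>
    simp only [Multiset.map_cons, Multiset.sum_cons]
    refine HasDerivAt.add ?_ (ih fun β hβ => hy β (Multiset.mem_cons_of_mem hβ))
    have ha : y - a ≠ 0 := sub_ne_zero.mpr (hy a (Multiset.mem_cons_self a s))
    simpa [one_div, neg_div] using ((hasDerivAt_id' y).sub_const a).fun_inv ha

/-- Differentiate `Splits.eval_derivative_div_eval_of_ne_zero` in `y`. -/
theorem sum_roots_one_div_sub_sq {f : ℂ[X]} {y : ℂ} (hy : f.eval y ≠ 0) :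
    (f.roots.map fun β => 1 / (y - β) ^ 2).sum =
      ((f.derivative.eval y) ^ 2 - f.eval y * f.derivative.derivative.eval y) / f.eval y ^ 2 := by
  have hquot : HasDerivAt (fun w => f.derivative.eval w / f.eval w)
      ((f.derivative.derivative.eval y * f.eval y - f.derivative.eval y * f.derivative.eval y) /
        f.eval y ^ 2) y :=
    (f.derivative.hasDerivAt y).div (f.hasDerivAt y) hy
  have hsum : HasDerivAt (fun w => f.derivative.eval w / f.eval w)
      (f.roots.map fun β => -(1 / (y - β) ^ 2)).sum y := by
    refine (hasDerivAt_sum_roots_inv_sub f.roots fun β hβ h => hy ?_).congr_of_eventuallyEq ?_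
    · exact h ▸ (mem_roots'.mp hβ).2
    · filter_upwards [f.continuous.continuousAt.eventually_ne hy] with w hw
      exact (IsAlgClosed.splits f).eval_derivative_div_eval_of_ne_zero hw
  have := hquot.unique hsum
  rw [Multiset.sum_map_neg] at this
  rw [← neg_neg (Multiset.sum _), ← this]
  field_simp
  ring

theorem continuous_eval_map_evalRingHom (B : ℂ[X][X]) :
    Continuous fun xy : ℂ × ℂ => (B.map (evalRingHom xy.1)).eval xy.2 := by
  simp only [eval_map, eval₂_eq_sum_range, coe_evalRingHom]
  fun_prop

variable {B : ℂ[X][X]}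

/-- Hurwitz's theorem for a polynomial family `x ↦ B(x, ·)`. -/
theorem eventually_exists_mem_roots_near {x₀ y₀ : ℂ} (hB : B.map (evalRingHom x₀) ≠ 0)
    (hy₀ : (B.map (evalRingHom x₀)).IsRoot y₀) {δ : ℝ} (hδ : 0 < δ) :
    ∀ᶠ x in 𝓝 x₀, ∃ β ∈ (B.map (evalRingHom x)).roots, dist y₀ β < δ := by
  obtain ⟨y₁, hy₁, hy₁₀⟩ : ∃ y₁, (B.map (evalRingHom x₀)).eval y₁ ≠ 0 ∧ dist y₁ y₀ ≤ δ / 2 :=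
    ((eventually_nhdsNE_eval_ne_zero hB y₀).and (eventually_nhdsWithin_of_eventually_nhds
      (Metric.closedBall_mem_nhds y₀ (half_pos hδ)))).exists
  have hcont : ∀ y, Continuous fun x => (B.map (evalRingHom x)).eval y := fun y =>
    (continuous_eval_map_evalRingHom B).comp (continuous_id.prodMk continuous_const)
  set S := {x | ‖(B.map (evalRingHom x)).eval y₁‖ ≤
    (3 / 2 : ℝ) ^ B.natDegree * ‖(B.map (evalRingHom x)).eval y₀‖}
  have hS : IsClosed S := isClosed_le (hcont y₁).norm (continuous_const.mul (hcont y₀).norm)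
  -- while the roots stay `δ`-far from `y₀` we are in `S`, and at `x₀` this forces `y₁` to be a root
  by_contra h
  have hfar : ∃ᶠ x in 𝓝 x₀, x ∈ S := by
    refine (not_eventually.mp h).mono fun x hx => ?_
    push Not at hx
    refine (norm_eval_le_of_roots_far _ hx hy₁₀).trans ?_
    gcongr
    · norm_num
    · exact natDegree_map_le
  have := hS.mem_of_frequently_of_tendsto hfar tendsto_id
  simp only [S, Set.mem_ofPred_eq, hy₀.eq_zero, norm_zero, mul_zero, norm_le_zero_iff] at this
  exact hy₁ this

theorem exists_eventually_norm_le_of_isRoot {x₀ : ℂ} (hlc : B.leadingCoeff.eval x₀ ≠ 0) :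
    ∃ M : ℝ, ∀ᶠ x in 𝓝 x₀, ∀ y, (B.map (evalRingHom x)).IsRoot y → ‖y‖ ≤ M := by
  set D := B.natDegree
  have hlead : ∀ᶠ x in 𝓝 x₀, ‖B.leadingCoeff.eval x₀‖₊ / 2 < ‖B.leadingCoeff.eval x‖₊ :=
    (B.leadingCoeff.continuous.nnnorm.tendsto x₀).eventually
      (eventually_gt_nhds (NNReal.half_lt_self (nnnorm_ne_zero_iff.mpr hlc)))
  have hcoeff : ∀ᶠ x in 𝓝 x₀, ∀ k ∈ Finset.range D,
      ‖(B.coeff k).eval x‖₊ < ‖(B.coeff k).eval x₀‖₊ + 1 :=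
    (Finset.eventually_all _).mpr fun k _ => ((B.coeff k).continuous.nnnorm.tendsto x₀).eventually
      (eventually_lt_nhds (lt_add_one _))
  refine ⟨(Finset.range D).sup (fun k => ‖(B.coeff k).eval x₀‖₊ + 1) /
    (‖B.leadingCoeff.eval x₀‖₊ / 2) + 1, ?_⟩
  filter_upwards [hlead, hcoeff] with x hx hxk y hy
  have hne : evalRingHom x B.leadingCoeff ≠ 0 := nnnorm_pos.mp (pos_of_gt hx)
  have hf : B.map (evalRingHom x) ≠ 0 := fun h => hne (by
    rw [← leadingCoeff_map_of_leadingCoeff_ne_zero _ hne, h, leadingCoeff_zero])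
  have hbound : cauchyBound (B.map (evalRingHom x)) ≤ (Finset.range D).sup
      (fun k => ‖(B.coeff k).eval x₀‖₊ + 1) / (‖B.leadingCoeff.eval x₀‖₊ / 2) + 1 := by
    rw [cauchyBound, natDegree_map_of_leadingCoeff_ne_zero _ hne,
      leadingCoeff_map_of_leadingCoeff_ne_zero _ hne]
    gcongr with k hk
    · exact half_pos (nnnorm_pos.mpr hlc)
    · simpa [coeff_map] using (hxk k hk).le
    · exact hx.le
  exact_mod_cast ((hy.norm_lt_cauchyBound hf).trans_le hbound).le

theorem eventually_isRoot_mem_of_isOpen {x₀ : ℂ} (hlc : B.leadingCoeff.eval x₀ ≠ 0)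
    {U : Set ℂ} (hU : IsOpen U) (hroots : ∀ y, (B.map (evalRingHom x₀)).IsRoot y → y ∈ U) :
    ∀ᶠ x in 𝓝 x₀, ∀ y, (B.map (evalRingHom x)).IsRoot y → y ∈ U := by
  obtain ⟨M, hM⟩ := exists_eventually_norm_le_of_isRoot hlc
  have hK : IsCompact (Metric.closedBall 0 M \ U) := (isCompact_closedBall 0 M).diff hU
  have hne : ∀ᶠ x in 𝓝 x₀, ∀ y ∈ Metric.closedBall 0 M \ U, (B.map (evalRingHom x)).eval y ≠ 0 :=
    hK.eventually_forall_of_forall_eventually fun y hy =>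
      (continuous_eval_map_evalRingHom B).continuousAt.eventually_ne fun h => hy.2 (hroots y h)
  filter_upwards [hM, hne] with x hxM hxU y hy
  by_contra hyU
  exact hxU y ⟨mem_closedBall_zero_iff.mpr (hxM y hy), hyU⟩ hy

end Polynomial

theorem re_nonpos_of_hasDerivAt_of_im_nonpos {f : ℂ → ℂ} {d : ℂ} {x₀ : ℝ}
    (hd : HasDerivAt f d x₀) (hreal : (f x₀).im = 0)
    (him : ∀ᶠ ε : ℝ in 𝓝[>] 0, (f (x₀ + ε * I)).im ≤ 0) : d.re ≤ 0 := by
  have hline : HasDerivAt (fun ε : ℝ => (x₀ : ℂ) + ε * I) I 0 := by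
    simpa using ((hasDerivAt_id (0 : ℝ)).ofReal_comp.mul_const I).const_add (x₀ : ℂ)
  have hg : HasDerivAt (fun ε : ℝ => (f (x₀ + ε * I)).im) d.re 0 := by
    have := imCLM.hasFDerivAt.comp_hasDerivAt (0 : ℝ)
      ((show (x₀ : ℂ) = x₀ + (0 : ℝ) * I by simp) ▸ hd |>.comp (0 : ℝ) hline)
    exact this.congr_deriv (by simp)
  have hslope := (hasDerivAt_iff_tendsto_slope.mp hg).mono_left
    (nhdsWithin_mono _ (s := Set.Ioi 0) fun ε hε => ne_of_gt hε)
  refine le_of_tendsto hslope ?_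
  filter_upwards [him, self_mem_nhdsWithin] with ε hε (hpos : 0 < ε)
  rw [slope_def_field]
  simp only [sub_zero, ofReal_zero, zero_mul, add_zero, hreal]
  exact div_nonpos_of_nonpos_of_nonneg hε hpos.le

theorem im_multiset_sum_nonpos {s : Multiset ℂ} {g : ℂ → ℂ} (h : ∀ β ∈ s, (g β).im ≤ 0) :
    (s.map g).sum.im ≤ 0 := by
  have : (s.map g).sum.im = (s.map fun β => (g β).im).sum := by
    simpa [Multiset.map_map] using map_multiset_sum imAddGroupHom (s.map g)
  rw [this]
  exact (Multiset.sum_le_card_nsmul _ 0 (by simpa using h)).trans (by simp)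

theorem im_one_div_zero_sub_nonpos {β : ℂ} (h : β.im ≤ 0) : (1 / (0 - β)).im ≤ 0 := by
  rw [zero_sub, one_div, inv_im, neg_im, neg_neg, normSq_neg]
  exact div_nonpos_of_nonpos_of_nonneg h (normSq_nonneg β)

theorem im_one_div_zero_sub_sq_nonpos {β : ℂ} (him : β.im ≤ 0) (hre : β.re ≤ 0) :
    (1 / (0 - β) ^ 2).im ≤ 0 := by
  have : 0 ≤ (β ^ 2).im := by rw [sq, mul_im]; nlinarith
  rw [zero_sub, neg_sq, one_div, inv_im]
  exact div_nonpos_of_nonpos_of_nonneg (neg_nonpos.mpr this) (normSq_nonneg _)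

section Restriction

variable {σ R S : Type*} [CommSemiring R] [CommSemiring S] [Algebra R S]

theorem Polynomial.eval_mvAeval (f : σ → S[X]) (q : MvPolynomial σ R) (t : S) :
    (MvPolynomial.aeval f q).eval t = MvPolynomial.aeval (fun k => (f k).eval t) q :=
  MvPolynomial.comp_aeval_apply f ((Polynomial.aeval t).restrictScalars R) q

theorem Polynomial.map_evalRingHom_mvAeval (f : σ → S[X][X]) (q : MvPolynomial σ R) (t : S) :
    (MvPolynomial.aeval f q).map (evalRingHom t) =
      MvPolynomial.aeval (fun k => (f k).map (evalRingHom t)) q :=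
  MvPolynomial.comp_aeval_apply f (mapAlgHom ((Polynomial.aeval t).restrictScalars R)) q

def lineThrough (a v : σ → S) : σ → S[X] := fun k => C (a k) + C (v k) * X

/-- The plane `(x, y) ↦ a + x • b + y • c`; the outer variable is `y`. -/
def planeThrough (a b c : σ → S) : σ → S[X][X] := lineThrough (lineThrough a b) fun k => C (c k)

theorem eval_aeval_lineThrough (q : MvPolynomial σ R) (a v : σ → S) (t : S) :
    (MvPolynomial.aeval (lineThrough a v) q).eval t = MvPolynomial.aeval (a + t • v) q := by
  rw [eval_mvAeval]
  congr 2 with k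
  simp only [lineThrough, eval_add, eval_C, eval_mul, eval_X, Pi.add_apply, Pi.smul_apply,
    smul_eq_mul]
  ring

theorem map_evalRingHom_aeval_planeThrough (q : MvPolynomial σ R) (a b c : σ → S) (x : S) :
    (MvPolynomial.aeval (planeThrough a b c) q).map (evalRingHom x) =
      MvPolynomial.aeval (lineThrough (a + x • b) c) q := by
  rw [map_evalRingHom_mvAeval]
  congr 2
  funext k
  simp only [planeThrough, lineThrough, Polynomial.map_add, Polynomial.map_mul, map_C, map_X,
    coe_evalRingHom, eval_C, eval_X, Pi.add_apply, Pi.smul_apply, smul_eq_mul, C_add, C_mul]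
  ring

theorem eval_map_evalRingHom_aeval_planeThrough (q : MvPolynomial σ R) (a b c : σ → S) (x y : S) :
    ((MvPolynomial.aeval (planeThrough a b c) q).map (evalRingHom x)).eval y =
      MvPolynomial.aeval (a + x • b + y • c) q := by
  rw [map_evalRingHom_aeval_planeThrough, eval_aeval_lineThrough]

theorem derivative_aeval_lineThrough_single [DecidableEq σ] (q : MvPolynomial σ R) (a : σ → S)
    (i : σ) :
    derivative (MvPolynomial.aeval (lineThrough a (Pi.single i 1)) q) =
      MvPolynomial.aeval (lineThrough a (Pi.single i 1)) (MvPolynomial.pderiv i q) := by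
  induction q using MvPolynomial.induction_on with
  | C r => simp
  | add q₁ q₂ h₁ h₂ => simp [h₁, h₂]
  | mul_X q k h =>
    rcases eq_or_ne k i with rfl | hk
    · simp [lineThrough, h, mul_comm]
    · simp [lineThrough, h, hk, mul_comm]

end Restriction

def upperOrNonneg : AddSubmonoid ℂ where
  carrier := {u | 0 < u.im ∨ (u.im = 0 ∧ 0 ≤ u.re)}
  add_mem' := by
    rintro a b (ha | ⟨ha, ha'⟩) (hb | ⟨hb, hb'⟩) <;> simp only [Set.mem_ofPred_eq, add_im, add_re]
    · exact Or.inl (by linarith)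
    · exact Or.inl (by linarith)
    · exact Or.inl (by linarith)
    · exact Or.inr ⟨by linarith, by linarith⟩
  zero_mem' := Or.inr ⟨rfl, le_rfl⟩

@[simp]
theorem mem_upperOrNonneg {u : ℂ} : u ∈ upperOrNonneg ↔ 0 < u.im ∨ (u.im = 0 ∧ 0 ≤ u.re) :=
  Iff.rfl

section Stable

variable {m : ℕ} {p : MvPolynomial (Fin m) ℝ} {z : Fin m → ℝ}

theorem RealStable.aeval_ne_zero_of_update (hp : RealStable p) {w : Fin m → ℂ}
    (hw : ∀ k, 0 ≤ (w k).im) {k₁ : Fin m} (hk₁ : 0 < (w k₁).im) {y : ℂ}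
    (hy : MvPolynomial.aeval (Function.update w k₁ y) p ≠ 0) : MvPolynomial.aeval w p ≠ 0 := by
  classical
  set B :=
    MvPolynomial.aeval (planeThrough (Function.update w k₁ 0) (fun _ => I) (Pi.single k₁ 1)) p
  have hB : ∀ x y, (B.map (evalRingHom x)).eval y =
      MvPolynomial.aeval (Function.update w k₁ 0 + x • (fun _ => I) + y • Pi.single k₁ 1) p :=
    eval_map_evalRingHom_aeval_planeThrough _ _ _ _
  have hupdate : ∀ y, Function.update w k₁ 0 + (0 : ℂ) • (fun _ => I) + y • Pi.single k₁ 1 =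
      Function.update w k₁ y := by
    intro y
    ext k
    rcases eq_or_ne k k₁ with rfl | hk <;> simp [*]
  have hB0 : B.map (evalRingHom 0) ≠ 0 := fun h => hy (by rw [← hupdate, ← hB, h, eval_zero])
  -- by Hurwitz, a zero at `w` would survive as a zero `β` near `w k₁` after adding `ε * I` to every
  -- coordinate, at a point all of whose coordinates lie in the upper half-plane
  intro hw0
  have hroot : (B.map (evalRingHom 0)).IsRoot (w k₁) := by
    rw [IsRoot, hB, hupdate, Function.update_eq_self, hw0]
  have hnear : ∀ᶠ ε : ℝ in 𝓝[>] 0,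
      ∃ β ∈ (B.map (evalRingHom (ε : ℂ))).roots, dist (w k₁) β < (w k₁).im :=
    ((continuous_ofReal.tendsto' 0 0 ofReal_zero).eventually
      (eventually_exists_mem_roots_near hB0 hroot hk₁)).filter_mono nhdsWithin_le_nhds
  obtain ⟨ε, ⟨β, hβ, hdist⟩, hε : 0 < ε⟩ := (hnear.and self_mem_nhdsWithin).exists
  have hβim : 0 < β.im := by
    have := (abs_im_le_norm (w k₁ - β)).trans_lt (dist_eq_norm (w k₁) β ▸ hdist)
    rw [sub_im, abs_lt] at this
    linarith
  refine hp _ (fun k => ?_) (by rw [← hB]; exact (mem_roots'.mp hβ).2)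
  rcases eq_or_ne k k₁ with rfl | hk
  · simpa using add_pos hε hβim
  · simpa [hk] using add_pos_of_nonneg_of_pos (hw k) hε

theorem AboveRoots.aeval_ne_zero (hz : AboveRoots p z) {u : Fin m → ℝ} (hu : ∀ k, 0 ≤ u k) :
    MvPolynomial.aeval (fun k => ((z k + u k : ℝ) : ℂ)) p ≠ 0 := by
  rw [show (fun k => ((z k + u k : ℝ) : ℂ)) = algebraMap ℝ ℂ ∘ (z + u) from rfl,
    MvPolynomial.aeval_algebraMap_apply, _root_.map_ne_zero]
  exact (hz u hu).ne'

theorem RealStable.aeval_ne_zero (hp : RealStable p) (hz : AboveRoots p z) {w : Fin m → ℂ}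
    (hw : ∀ k, w k - z k ∈ upperOrNonneg) : MvPolynomial.aeval w p ≠ 0 := by
  classical
  induction hn : (Finset.univ.filter fun k => 0 < (w k).im).card generalizing w with
  | zero =>
    have hnonpos : ∀ k, (w k).im ≤ 0 := by simpa using Finset.card_eq_zero.mp hn
    have hreal : ∀ k, (w k).im = 0 ∧ 0 ≤ (w k - z k).re := fun k => by
      simpa [(hnonpos k).not_gt] using hw k
    have hw' : w = fun k => ((z k + (w k - z k).re : ℝ) : ℂ) := by
      funext k
      apply Complex.ext <;> simp [(hreal k).1]
    rw [hw']
    exact hz.aeval_ne_zero fun k => (hreal k).2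
  | succ n ih =>
    obtain ⟨k₁, hk₁⟩ := Finset.card_pos.mp (hn ▸ n.succ_pos :
      0 < (Finset.univ.filter fun k => 0 < (w k).im).card)
    have hk₁im := (Finset.mem_filter.mp hk₁).2
    refine hp.aeval_ne_zero_of_update (fun k => ?_) hk₁im (y := z k₁) (ih (fun k => ?_) ?_)
    · have h := hw k
      simp only [mem_upperOrNonneg, sub_im, ofReal_im, sub_zero] at h
      rcases h with h | h
      exacts [h.le, h.1.ge]
    · rcases eq_or_ne k k₁ with rfl | hk
      · simp
      · simpa [hk] using hw k
    · have hfilter : (Finset.univ.filter fun k => 0 < (Function.update w k₁ (z k₁) k).im) =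
          (Finset.univ.filter fun k => 0 < (w k).im).erase k₁ := by
        ext k
        rcases eq_or_ne k k₁ with rfl | hk <;> simp [*]
      rw [hfilter, Finset.card_erase_of_mem hk₁, hn, Nat.add_sub_cancel]

end Stable

section Barrier

variable {m : ℕ} (p : MvPolynomial (Fin m) ℝ) (z : Fin m → ℝ) (i j : Fin m)

/-- `p(z + x e_i + y e_j)`, a polynomial in `y` with coefficients polynomial in `x`. -/
def planeRestriction : ℂ[X][X] :=
  MvPolynomial.aeval (planeThrough (fun k => (z k : ℂ)) (Pi.single i 1) (Pi.single j 1)) p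

def lineEval (q : MvPolynomial (Fin m) ℝ) (x : ℂ) : ℂ :=
  MvPolynomial.aeval ((fun k => (z k : ℂ)) + x • Pi.single i 1) q

theorem eval_map_planeRestriction (x y : ℂ) :
    ((planeRestriction p z i j).map (evalRingHom x)).eval y =
      MvPolynomial.aeval ((fun k => (z k : ℂ)) + x • Pi.single i 1 + y • Pi.single j 1) p :=
  eval_map_evalRingHom_aeval_planeThrough _ _ _ _ _ _

theorem eval_zero_map_planeRestriction (x : ℂ) :
    ((planeRestriction p z i j).map (evalRingHom x)).eval 0 = lineEval z i p x := by
  rw [eval_map_planeRestriction]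
  simp [lineEval]

theorem derivative_map_planeRestriction (x : ℂ) :
    derivative ((planeRestriction p z i j).map (evalRingHom x)) =
      (planeRestriction (MvPolynomial.pderiv j p) z i j).map (evalRingHom x) := by
  simp only [planeRestriction, map_evalRingHom_aeval_planeThrough,
    derivative_aeval_lineThrough_single]

theorem hasDerivAt_lineEval (q : MvPolynomial (Fin m) ℝ) (x : ℂ) :
    HasDerivAt (lineEval z i q) (lineEval z i (MvPolynomial.pderiv i q) x) x := by
  have h := (MvPolynomial.aeval (lineThrough (fun k => (z k : ℂ)) (Pi.single i 1)) q).hasDerivAt x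
  simp only [derivative_aeval_lineThrough_single, eval_aeval_lineThrough] at h
  exact h

theorem lineEval_ofReal (q : MvPolynomial (Fin m) ℝ) (t : ℝ) :
    lineEval z i q t = ((MvPolynomial.eval (z + t • Pi.single i 1) q : ℝ) : ℂ) := by
  have hpoint : (fun k => (z k : ℂ)) + (t : ℂ) • Pi.single i 1 =
      algebraMap ℝ ℂ ∘ (z + t • Pi.single i 1) := by
    ext k
    simp [Pi.single_apply, apply_ite ((↑) : ℝ → ℂ)]
  rw [lineEval, hpoint, MvPolynomial.aeval_algebraMap_apply]
  rfl

/-- `Φ^j_p(z + x e_i)`, for complex `x`. -/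
def phiLine (x : ℂ) : ℂ :=
  lineEval z i (MvPolynomial.pderiv j p) x / lineEval z i p x

/-- `(Φ^j_p)² - Ψ^j_p = -∂_j Φ^j_p` at `z + x e_i`, for complex `x`. -/
def phiSqSubPsiLine (x : ℂ) : ℂ :=
  (lineEval z i (MvPolynomial.pderiv j p) x ^ 2 -
      lineEval z i p x * lineEval z i (MvPolynomial.pderiv j (MvPolynomial.pderiv j p)) x) /
    lineEval z i p x ^ 2

theorem phiLine_eq_sum_roots {x : ℂ} (hx : lineEval z i p x ≠ 0) :
    phiLine p z i j x = (((planeRestriction p z i j).map (evalRingHom x)).roots.map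
      fun β => 1 / (0 - β)).sum := by
  rw [← eval_zero_map_planeRestriction p z i j] at hx
  rw [phiLine, ← eval_zero_map_planeRestriction, ← eval_zero_map_planeRestriction,
    ← derivative_map_planeRestriction]
  exact (IsAlgClosed.splits _).eval_derivative_div_eval_of_ne_zero hx

theorem phiSqSubPsiLine_eq_sum_roots {x : ℂ} (hx : lineEval z i p x ≠ 0) :
    phiSqSubPsiLine p z i j x = (((planeRestriction p z i j).map (evalRingHom x)).roots.map
      fun β => 1 / (0 - β) ^ 2).sum := by
  rw [← eval_zero_map_planeRestriction p z i j] at hx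
  rw [phiSqSubPsiLine, ← eval_zero_map_planeRestriction, ← eval_zero_map_planeRestriction,
    ← eval_zero_map_planeRestriction, ← derivative_map_planeRestriction,
    ← derivative_map_planeRestriction, ← derivative_map_planeRestriction]
  exact (sum_roots_one_div_sub_sq hx).symm

theorem hasDerivAt_phiLine {t : ℝ} (ht : MvPolynomial.eval (z + t • Pi.single i 1) p ≠ 0) :
    HasDerivAt (phiLine p z i j) (dPhi p i j (z + t • Pi.single i 1) : ℂ) t := by
  have hF : lineEval z i p t ≠ 0 := by rw [lineEval_ofReal]; exact_mod_cast ht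
  refine ((hasDerivAt_lineEval z i (MvPolynomial.pderiv j p) t).div
    (hasDerivAt_lineEval z i p t) hF).congr_deriv ?_
  simp only [lineEval_ofReal, dPhi]
  push_cast
  ring

theorem hasDerivAt_phiSqSubPsiLine {t : ℝ}
    (ht : MvPolynomial.eval (z + t • Pi.single i 1) p ≠ 0) :
    HasDerivAt (phiSqSubPsiLine p z i j)
      ((2 * Phi p j (z + t • Pi.single i 1) * dPhi p i j (z + t • Pi.single i 1) -
        dPsi p i j (z + t • Pi.single i 1) : ℝ) : ℂ) t := by
  have hF : lineEval z i p t ≠ 0 := by rw [lineEval_ofReal]; exact_mod_cast ht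
  have hG := hasDerivAt_lineEval z i (MvPolynomial.pderiv j p) t
  refine (((hG.pow 2).sub ((hasDerivAt_lineEval z i p t).mul
    (hasDerivAt_lineEval z i (MvPolynomial.pderiv j (MvPolynomial.pderiv j p)) t))).div
    ((hasDerivAt_lineEval z i p t).pow 2) (pow_ne_zero 2 hF)).congr_deriv ?_
  have hF' : ((MvPolynomial.eval (z + t • Pi.single i 1) p : ℝ) : ℂ) ≠ 0 := by exact_mod_cast ht
  simp only [Pi.pow_apply, Pi.sub_apply, Pi.mul_apply, lineEval_ofReal, Phi, dPhi, dPsi]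
  push_cast
  field_simp
  ring

variable {p z} (hp : RealStable p) (hz : AboveRoots p z)
include hp hz

theorem aeval_plane_ne_zero {x y : ℂ} (hx : x ∈ upperOrNonneg) (hy : y ∈ upperOrNonneg) :
    MvPolynomial.aeval ((fun k => (z k : ℂ)) + x • Pi.single i 1 + y • Pi.single j 1) p ≠ 0 := by
  refine hp.aeval_ne_zero hz fun k => ?_
  rw [show _ - _ = x * (Pi.single i 1 : Fin m → ℂ) k + y * (Pi.single j 1 : Fin m → ℂ) k by
    simp only [Pi.add_apply, Pi.smul_apply, smul_eq_mul]; ring]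
  refine add_mem ?_ ?_ <;> simp only [Pi.single_apply] <;> split_ifs <;> simp [hx, hy]

theorem lineEval_ne_zero {x : ℂ} (hx : x ∈ upperOrNonneg) : lineEval z i p x ≠ 0 := by
  simpa [lineEval] using aeval_plane_ne_zero i i hp hz hx (zero_mem _)

theorem im_nonpos_of_isRoot {x : ℂ} (hx : 0 < x.im) {β : ℂ}
    (hβ : ((planeRestriction p z i j).map (evalRingHom x)).IsRoot β) : β.im ≤ 0 := by
  by_contra! h
  exact aeval_plane_ne_zero i j hp hz (Or.inl hx) (Or.inl h) (eval_map_planeRestriction .. ▸ hβ)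

theorem re_neg_of_isRoot {t : ℝ} (ht : 0 ≤ t) {β : ℂ}
    (hβ : ((planeRestriction p z i j).map (evalRingHom (t : ℂ))).IsRoot β) : β.re < 0 := by
  by_contra! hre
  have ht' : (t : ℂ) ∈ upperOrNonneg := Or.inr ⟨ofReal_im t, ht⟩
  rw [IsRoot, eval_map_planeRestriction] at hβ
  rcases le_or_gt 0 β.im with him | him
  · exact aeval_plane_ne_zero i j hp hz ht' (him.lt_or_eq.imp id fun h => ⟨h.symm, hre⟩) hβ
  -- the coefficients and `t` are real, so `conj β` is a root as well
  · refine aeval_plane_ne_zero i j hp hz ht' (y := starRingEnd ℂ β) (Or.inl (by simpa)) ?_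
    rw [← map_zero (starRingEnd ℂ), ← hβ, ← Complex.conjAe_coe, ← AlgEquiv.coe_toAlgHom,
      MvPolynomial.comp_aeval_apply]
    congr 1
    ext k
    simp [Pi.single_apply, apply_ite (starRingEnd ℂ)]

theorem dPhi_nonpos : dPhi p i j z ≤ 0 := by
  have hz0 : MvPolynomial.eval (z + (0 : ℝ) • Pi.single i 1) p ≠ 0 := by
    simpa using (hz 0 fun _ => le_rfl).ne'
  have him : ∀ᶠ ε : ℝ in 𝓝[>] 0, (phiLine p z i j ((0 : ℝ) + ε * I)).im ≤ 0 := by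
    filter_upwards [self_mem_nhdsWithin] with ε (hε : 0 < ε)
    have hx : 0 < ((0 : ℝ) + ε * I).im := by simpa using hε
    rw [phiLine_eq_sum_roots p z i j (lineEval_ne_zero i hp hz (Or.inl hx))]
    refine im_multiset_sum_nonpos fun β hβ => ?_
    exact im_one_div_zero_sub_nonpos (im_nonpos_of_isRoot i j hp hz hx (isRoot_of_mem_roots hβ))
  have hreal : (phiLine p z i j (0 : ℝ)).im = 0 := by
    simp only [phiLine, lineEval_ofReal, ← ofReal_div, ofReal_im]
  simpa using re_nonpos_of_hasDerivAt_of_im_nonpos (hasDerivAt_phiLine p z i j hz0) hreal him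

theorem dPsi_sub_two_mul_Phi_mul_dPhi_nonneg_of_leadingCoeff {t : ℝ} (ht : 0 ≤ t)
    (hlc : (planeRestriction p z i j).leadingCoeff.eval (t : ℂ) ≠ 0) :
    0 ≤ dPsi p i j (z + t • Pi.single i 1) -
      2 * Phi p j (z + t • Pi.single i 1) * dPhi p i j (z + t • Pi.single i 1) := by
  have hzt : MvPolynomial.eval (z + t • Pi.single i 1) p ≠ 0 := by
    refine (hz _ fun k => ?_).ne'
    simp only [Pi.smul_apply, Pi.single_apply, smul_eq_mul]
    split_ifs <;> simp [ht]
  have hleft : ∀ᶠ x in 𝓝 (t : ℂ),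
      ∀ β, ((planeRestriction p z i j).map (evalRingHom x)).IsRoot β → β ∈ {β : ℂ | β.re < 0} :=
    eventually_isRoot_mem_of_isOpen hlc (isOpen_lt continuous_re continuous_const)
      fun β hβ => re_neg_of_isRoot i j hp hz ht hβ
  have hline : Tendsto (fun ε : ℝ => (t : ℂ) + ε * I) (𝓝[>] 0) (𝓝 (t : ℂ)) :=
    (Continuous.tendsto' (by fun_prop) 0 _ (by simp)).mono_left nhdsWithin_le_nhds
  have him : ∀ᶠ ε : ℝ in 𝓝[>] 0, (phiSqSubPsiLine p z i j (t + ε * I)).im ≤ 0 := by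
    filter_upwards [hline.eventually hleft, self_mem_nhdsWithin] with ε hε (hpos : 0 < ε)
    have hx : 0 < ((t : ℂ) + ε * I).im := by simpa using hpos
    rw [phiSqSubPsiLine_eq_sum_roots p z i j (lineEval_ne_zero i hp hz (Or.inl hx))]
    refine im_multiset_sum_nonpos fun β hβ => ?_
    exact im_one_div_zero_sub_sq_nonpos (im_nonpos_of_isRoot i j hp hz hx (isRoot_of_mem_roots hβ))
      (hε β (isRoot_of_mem_roots hβ)).le
  have hreal : (phiSqSubPsiLine p z i j t).im = 0 := by
    simp only [phiSqSubPsiLine, lineEval_ofReal]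
    norm_cast
  have := re_nonpos_of_hasDerivAt_of_im_nonpos (hasDerivAt_phiSqSubPsiLine p z i j hzt) hreal him
  rw [ofReal_re] at this
  linarith

theorem two_mul_Phi_mul_dPhi_le_dPsi : 2 * Phi p j z * dPhi p i j z ≤ dPsi p i j z := by
  set g : ℝ → ℝ := fun t => dPsi p i j (z + t • Pi.single i 1) -
    2 * Phi p j (z + t • Pi.single i 1) * dPhi p i j (z + t • Pi.single i 1)
  have hz0 : MvPolynomial.eval (z + (0 : ℝ) • Pi.single i 1) p ≠ 0 := by
    simpa using (hz 0 fun _ => le_rfl).ne'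
  have hcont : ContinuousAt g 0 := by
    have hev : ∀ q : MvPolynomial (Fin m) ℝ,
        Continuous fun t : ℝ => MvPolynomial.eval (z + t • Pi.single i 1) q := fun q =>
      (MvPolynomial.continuous_eval q).comp (by fun_prop)
    simp only [g, dPsi, Phi, dPhi]
    fun_prop (disch := exact pow_ne_zero 2 hz0)
  have hB : planeRestriction p z i j ≠ 0 := fun h => lineEval_ne_zero i hp hz (zero_mem _) (by
    rw [← eval_zero_map_planeRestriction p z i j, h, Polynomial.map_zero, eval_zero])
  have hofReal : Tendsto (fun t : ℝ => (t : ℂ)) (𝓝[>] 0) (𝓝[≠] 0) :=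
    tendsto_nhdsWithin_of_tendsto_nhds_of_eventually_within _
      ((continuous_ofReal.tendsto' 0 0 ofReal_zero).mono_left nhdsWithin_le_nhds)
      (eventually_nhdsWithin_of_forall fun t (ht : 0 < t) => ofReal_ne_zero.mpr ht.ne')
  have hgood := hofReal.eventually (eventually_nhdsNE_eval_ne_zero (leadingCoeff_ne_zero.mpr hB) 0)
  have := ge_of_tendsto (hcont.tendsto.mono_left nhdsWithin_le_nhds) (by
    filter_upwards [hgood, self_mem_nhdsWithin] with t ht (hpos : 0 < t)
    exact dPsi_sub_two_mul_Phi_mul_dPhi_nonneg_of_leadingCoeff i j hp hz hpos.le ht)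
  simp only [g, zero_smul, add_zero] at this
  linarith

end Barrier

/-- If `p` is real stable and `z` is above all roots of `p`, then for all `i, j`:
`∂_{z_i} Ψ^j_p(z) ≥ 2·Φ^j_p(z)·∂_{z_i} Φ^j_p(z)`; moreover `∂_{z_i} Φ^j_p(z) ≤ 0`, so
whenever `∂_{z_i} Φ^j_p(z) ≠ 0` one has
`(∂_{z_i} Ψ^j_p(z)) / (∂_{z_i} Φ^j_p(z)) ≤ 2·Φ^j_p(z)`. -/
theorem stmt18 {m : ℕ} (p : MvPolynomial (Fin m) ℝ) (hp : RealStable p)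
    (z : Fin m → ℝ) (hz : AboveRoots p z) :
    ∀ i j : Fin m,
      2 * Phi p j z * dPhi p i j z ≤ dPsi p i j z ∧
      dPhi p i j z ≤ 0 ∧
      (dPhi p i j z ≠ 0 → dPsi p i j z / dPhi p i j z ≤ 2 * Phi p j z) := by
  intro i j
  have hdPhi := dPhi_nonpos i j hp hz
  have hdPsi := two_mul_Phi_mul_dPhi_le_dPsi i j hp hz
  refine ⟨hdPsi, hdPhi, fun hne => ?_⟩
  rw [div_le_iff_of_neg (hdPhi.lt_of_ne hne)]
  linarith
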